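/- The class of finite series-parallel partial orders (orders constructible from single points by disjoint union and ordinal sum) is exactly the class of finite N-free partial orders. -/

import Mathlib

/-!
An N-configuration inside a disjoint union or an ordinal sum lies entirely in one summand, so
series-parallel orders are N-free. Conversely, an induced path `w - x - y - z` in the
comparability graph of a strict order orients into an N, so an N-free order has a `P₄`-free
comparability graph. By Seinsche's theorem a `P₄`-free graph on at least two vertices is
disconnected or has a disconnected complement. A component of the comparability graph splits
the order as a disjoint union; the co-component of a minimal element lies below all other points,
splitting the order as an ordinal sum. Induction on the number of points concludes.
-/

/-- Terms denoting dicographs: built from single points by parallel composition `⅋`,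
symmetric series composition `⊗` and directed series composition `◁`. -/
inductive DTerm (V : Type) : Type
  | leaf : V → DTerm V
  | par : DTerm V → DTerm V → DTerm V
  | tens : DTerm V → DTerm V → DTerm V
  | seq : DTerm V → DTerm V → DTerm V

namespace DTerm

/-- The list of points (leaves) of a term. -/
def leaves {V : Type} : DTerm V → List V
  | leaf v => [v]
  | par s t => leaves s ++ leaves t
  | tens s t => leaves s ++ leaves t
  | seq s t => leaves s ++ leaves t

/-- The irreflexive binary relation (dicograph) denoted by a term:
`⅋` is disjoint union, `⊗` adds all pairs in both directions between the two domains,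
`◁` adds all arcs from the first domain to the second. -/
def rel {V : Type} : DTerm V → V → V → Prop
  | leaf _ => fun _ _ => False
  | par s t => fun a b => rel s a b ∨ rel t a b
  | tens s t => fun a b =>
      rel s a b ∨ rel t a b ∨ (a ∈ leaves s ∧ b ∈ leaves t) ∨ (a ∈ leaves t ∧ b ∈ leaves s)
  | seq s t => fun a b => rel s a b ∨ rel t a b ∨ (a ∈ leaves s ∧ b ∈ leaves t)

end DTerm

/-- `R` is a dicograph with domain `E`: it is denoted by some term with pairwise
distinct leaves (i.e. it is constructible from singletons by the three compositions). -/
def IsDicograph {V : Type} (E : Set V) (R : V → V → Prop) : Prop :=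
  ∃ T : DTerm V, T.leaves.Nodup ∧ (∀ v, v ∈ T.leaves ↔ v ∈ E) ∧ (∀ a b, T.rel a b ↔ R a b)

/-- A term using only parallel composition (disjoint union) and directed series
composition (ordinal sum): a series-parallel order term. -/
def NoTens {V : Type} : DTerm V → Prop
  | DTerm.leaf _ => True
  | DTerm.par s t => NoTens s ∧ NoTens t
  | DTerm.seq s t => NoTens s ∧ NoTens t
  | DTerm.tens _ _ => False

/-- `R` is a series-parallel order on `E`: constructible from single points by
disjoint union and ordinal sum. -/
def IsSPOrder {V : Type} (E : Set V) (R : V → V → Prop) : Prop :=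
  ∃ T : DTerm V, NoTens T ∧ T.leaves.Nodup ∧
    (∀ v, v ∈ T.leaves ↔ v ∈ E) ∧ (∀ a b, T.rel a b ↔ R a b)

/-- `S` is N-free: no four elements with `a < c`, `b < c`, `b < d`, with `a,b`
incomparable, `c,d` incomparable and `a,d` incomparable. -/
def NFreeOrder {V : Type} (S : V → V → Prop) : Prop :=
  ¬ ∃ a b c d : V, a ≠ b ∧ a ≠ c ∧ a ≠ d ∧ b ≠ c ∧ b ≠ d ∧ c ≠ d ∧
      S a c ∧ S b c ∧ S b d ∧
      ¬ S a b ∧ ¬ S b a ∧ ¬ S c d ∧ ¬ S d c ∧ ¬ S a d ∧ ¬ S d a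

section

variable {V : Type}

def IsInducedN (S : V → V → Prop) (a b c d : V) : Prop :=
  a ≠ b ∧ a ≠ c ∧ a ≠ d ∧ b ≠ c ∧ b ≠ d ∧ c ≠ d ∧
    S a c ∧ S b c ∧ S b d ∧
    ¬ S a b ∧ ¬ S b a ∧ ¬ S c d ∧ ¬ S d c ∧ ¬ S a d ∧ ¬ S d a

theorem nFreeOrder_iff {S : V → V → Prop} :
    NFreeOrder S ↔ ∀ a b c d, ¬ IsInducedN S a b c d := by
  simp only [NFreeOrder, IsInducedN, not_exists]

theorem isInducedN_congr {S S' : V → V → Prop} {P : V → Prop}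
    (h : ∀ x, P x → ∀ y, P y → (S x y ↔ S' x y)) {a b c d : V}
    (ha : P a) (hb : P b) (hc : P c) (hd : P d) :
    IsInducedN S a b c d ↔ IsInducedN S' a b c d := by
  simp only [IsInducedN, h a ha c hc, h b hb c hc, h b hb d hd, h a ha b hb, h b hb a ha,
    h c hc d hd, h d hd c hc, h a ha d hd, h d hd a ha]

def restrictRel (R : V → V → Prop) (X : Set V) (a b : V) : Prop := R a b ∧ a ∈ X ∧ b ∈ X

theorem NFreeOrder.restrictRel {R : V → V → Prop} (hR : NFreeOrder R) (X : Set V) :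
    NFreeOrder (restrictRel R X) := by
  rw [nFreeOrder_iff] at hR ⊢
  intro a b c d hN
  obtain ⟨-, -, -, -, -, -, ⟨-, ha, hc⟩, ⟨-, hb, -⟩, ⟨-, -, hd⟩, -⟩ := id hN
  exact hR a b c d ((isInducedN_congr (fun x hx y hy => ⟨fun h => h.1, fun h => ⟨h, hx, hy⟩⟩)
    ha hb hc hd).1 hN)

namespace DTerm

variable {s t : DTerm V} {a b : V}

theorem mem_leaves_of_rel {T : DTerm V} (h : T.rel a b) : a ∈ T.leaves ∧ b ∈ T.leaves := by
  induction T with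
  | leaf => exact h.elim
  | _ => grind [rel, leaves]

theorem par_rel_iff_left (hst : s.leaves.Disjoint t.leaves) (ha : a ∈ s.leaves) :
    (par s t).rel a b ↔ s.rel a b :=
  or_iff_left fun h => hst ha (mem_leaves_of_rel h).1

theorem par_rel_iff_right (hst : s.leaves.Disjoint t.leaves) (ha : a ∈ t.leaves) :
    (par s t).rel a b ↔ t.rel a b :=
  or_iff_right fun h => hst (mem_leaves_of_rel h).1 ha

theorem seq_rel_iff_left (hst : s.leaves.Disjoint t.leaves) (hb : b ∈ s.leaves) :
    (seq s t).rel a b ↔ s.rel a b :=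
  or_iff_left (not_or.2 ⟨fun h => hst hb (mem_leaves_of_rel h).2, fun h => hst hb h.2⟩)

theorem seq_rel_iff_right (hst : s.leaves.Disjoint t.leaves) (ha : a ∈ t.leaves) :
    (seq s t).rel a b ↔ t.rel a b :=
  (or_iff_right fun h => hst (mem_leaves_of_rel h).1 ha).trans (or_iff_left fun h => hst h.1 ha)

theorem mem_iff_of_rel_par (hst : s.leaves.Disjoint t.leaves) (h : (par s t).rel a b) :
    (a ∈ s.leaves ↔ b ∈ s.leaves) ∧ (a ∈ t.leaves ↔ b ∈ t.leaves) := by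
  rcases h with h | h <;> obtain ⟨ha, hb⟩ := mem_leaves_of_rel h
  · exact ⟨iff_of_true ha hb, iff_of_false (hst ha) (hst hb)⟩
  · exact ⟨iff_of_false (fun h => hst h ha) (fun h => hst h hb), iff_of_true ha hb⟩

theorem nFreeOrder_rel_par (hst : s.leaves.Disjoint t.leaves) (hs : NFreeOrder s.rel)
    (ht : NFreeOrder t.rel) : NFreeOrder (par s t).rel := by
  rw [nFreeOrder_iff] at hs ht ⊢
  intro a b c d hN
  obtain ⟨-, -, -, -, -, -, hac, hbc, hbd, -⟩ := id hN
  rcases List.mem_append.1 (mem_leaves_of_rel hac).1 with ha | ha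
  · have hc := (mem_iff_of_rel_par hst hac).1.1 ha
    have hb := (mem_iff_of_rel_par hst hbc).1.2 hc
    have hd := (mem_iff_of_rel_par hst hbd).1.1 hb
    exact hs a b c d
      ((isInducedN_congr (fun x hx _ _ => par_rel_iff_left hst hx) ha hb hc hd).1 hN)
  · have hc := (mem_iff_of_rel_par hst hac).2.1 ha
    have hb := (mem_iff_of_rel_par hst hbc).2.2 hc
    have hd := (mem_iff_of_rel_par hst hbd).2.1 hb
    exact ht a b c d
      ((isInducedN_congr (fun x hx _ _ => par_rel_iff_right hst hx) ha hb hc hd).1 hN)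

theorem nFreeOrder_rel_seq (hst : s.leaves.Disjoint t.leaves) (hs : NFreeOrder s.rel)
    (ht : NFreeOrder t.rel) : NFreeOrder (seq s t).rel := by
  rw [nFreeOrder_iff] at hs ht ⊢
  intro a b c d hN
  obtain ⟨-, -, -, -, -, -, hac, hbc, hbd, nab, nba, ncd, ndc, nad, nda⟩ := id hN
  have mem : ∀ {x y}, (seq s t).rel x y →
      (x ∈ s.leaves ∨ x ∈ t.leaves) ∧ (y ∈ s.leaves ∨ y ∈ t.leaves) := fun h => by
    simpa only [leaves, List.mem_append] using mem_leaves_of_rel h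
  have cross : ∀ {x y}, x ∈ s.leaves → y ∈ t.leaves → (seq s t).rel x y :=
    fun hx hy => Or.inr (Or.inr ⟨hx, hy⟩)
  rcases (mem hac).1 with ha | ha
  · have hb := (mem hbc).1.resolve_right fun hb => nab (cross ha hb)
    have hd := (mem hbd).2.resolve_right fun hd => nad (cross ha hd)
    have hc := (mem hac).2.resolve_right fun hc => ndc (cross hd hc)
    exact hs a b c d
      ((isInducedN_congr (fun _ _ y hy => seq_rel_iff_left hst hy) ha hb hc hd).1 hN)
  · have hb := (mem hbc).1.resolve_left fun hb => nba (cross hb ha)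
    have hd := (mem hbd).2.resolve_left fun hd => nda (cross hd ha)
    have hc := (mem hac).2.resolve_left fun hc => ncd (cross hc hd)
    exact ht a b c d
      ((isInducedN_congr (fun x hx _ _ => seq_rel_iff_right hst hx) ha hb hc hd).1 hN)

theorem nFreeOrder_rel_of_noTens {T : DTerm V} (hT : NoTens T) (hnd : T.leaves.Nodup) :
    NFreeOrder T.rel := by
  induction T with
  | leaf => rintro ⟨-, -, -, -, -, -, -, -, -, -, ⟨⟩, -⟩
  | tens => exact hT.elim
  | par s t ihs iht =>
    obtain ⟨hs, ht, hst⟩ := List.nodup_append'.1 hnd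
    exact nFreeOrder_rel_par hst (ihs hT.1 hs) (iht hT.2 ht)
  | seq s t ihs iht =>
    obtain ⟨hs, ht, hst⟩ := List.nodup_append'.1 hnd
    exact nFreeOrder_rel_seq hst (ihs hT.1 hs) (iht hT.2 ht)

end DTerm

theorem IsSPOrder.nFreeOrder {E : Set V} {R : V → V → Prop} (h : IsSPOrder E R) :
    NFreeOrder R := by
  obtain ⟨T, hT, hnd, -, hrel⟩ := h
  simpa only [NFreeOrder, hrel] using T.nFreeOrder_rel_of_noTens hT hnd

theorem isSPOrder_singleton (v : V) : IsSPOrder {v} fun _ _ => False :=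
  ⟨.leaf v, trivial, List.nodup_singleton v, by simp [DTerm.leaves], fun _ _ => Iff.rfl⟩

theorem IsSPOrder.par {X Y : Set V} {R₁ R₂ : V → V → Prop} (h₁ : IsSPOrder X R₁)
    (h₂ : IsSPOrder Y R₂) (hXY : Disjoint X Y) :
    IsSPOrder (X ∪ Y) fun a b => R₁ a b ∨ R₂ a b := by
  obtain ⟨S, hS, hSnd, hSmem, hSrel⟩ := h₁
  obtain ⟨T, hT, hTnd, hTmem, hTrel⟩ := h₂
  refine ⟨.par S T, ⟨hS, hT⟩, List.nodup_append'.2 ⟨hSnd, hTnd, fun v hvS hvT => ?_⟩,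
    fun v => ?_, fun a b => ?_⟩
  · exact Set.disjoint_left.1 hXY ((hSmem v).1 hvS) ((hTmem v).1 hvT)
  · simp only [DTerm.leaves, List.mem_append, hSmem, hTmem, Set.mem_union]
  · simp only [DTerm.rel, hSrel, hTrel]

theorem IsSPOrder.seq {X Y : Set V} {R₁ R₂ : V → V → Prop} (h₁ : IsSPOrder X R₁)
    (h₂ : IsSPOrder Y R₂) (hXY : Disjoint X Y) :
    IsSPOrder (X ∪ Y) fun a b => R₁ a b ∨ R₂ a b ∨ (a ∈ X ∧ b ∈ Y) := by
  obtain ⟨S, hS, hSnd, hSmem, hSrel⟩ := h₁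
  obtain ⟨T, hT, hTnd, hTmem, hTrel⟩ := h₂
  refine ⟨.seq S T, ⟨hS, hT⟩, List.nodup_append'.2 ⟨hSnd, hTnd, fun v hvS hvT => ?_⟩,
    fun v => ?_, fun a b => ?_⟩
  · exact Set.disjoint_left.1 hXY ((hSmem v).1 hvS) ((hTmem v).1 hvT)
  · simp only [DTerm.leaves, List.mem_append, hSmem, hTmem, Set.mem_union]
  · simp only [DTerm.rel, hSrel, hTrel, hSmem, hTmem]

end

theorem Relation.ReflTransGen.exists_boundary {α : Type*} {r : α → α → Prop} {P : α → Prop}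
    {a b : α} (h : ReflTransGen r a b) (ha : ¬ P a) (hb : P b) :
    ∃ x y, r x y ∧ ¬ P x ∧ P y := by
  induction h with
  | refl => exact absurd hb ha
  | @tail c d _ hcd ih =>
    by_cases hc : P c
    · exact ih hc
    · exact ⟨c, d, hcd, hc, hb⟩

namespace SimpleGraph

variable {V : Type*} (G : SimpleGraph V)

def ReachableIn (E : Set V) : V → V → Prop :=
  Relation.ReflTransGen fun x y => x ∈ E ∧ y ∈ E ∧ G.Adj x y

def PreconnectedOn (E : Set V) : Prop :=
  ∀ a ∈ E, ∀ b ∈ E, G.ReachableIn E a b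

/-- Induced-`P₄`-freeness on `E`: a walk `w, x, y, z` that repeats a vertex satisfies the
conclusion anyway, so no distinctness hypotheses are needed. -/
def P4FreeOn (E : Set V) : Prop :=
  ∀ w ∈ E, ∀ x ∈ E, ∀ y ∈ E, ∀ z ∈ E,
    G.Adj w x → G.Adj x y → G.Adj y z → G.Adj w y ∨ G.Adj x z ∨ G.Adj w z

variable {G} {E F : Set V} {u v w : V}

theorem ReachableIn.trans (huv : G.ReachableIn E u v) (hvw : G.ReachableIn E v w) :
    G.ReachableIn E u w :=
  Relation.ReflTransGen.trans huv hvw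

theorem ReachableIn.symm (h : G.ReachableIn E u v) : G.ReachableIn E v u :=
  Relation.ReflTransGen.mono (fun _ _ h => ⟨h.2.1, h.1, h.2.2.symm⟩) _ _
    (Relation.ReflTransGen.swap _ _ h)

theorem ReachableIn.exists_adj_of_mem_sdiff (h : G.ReachableIn E u v) (hu : u ∈ E \ {v}) :
    ∃ w ∈ E \ {v}, G.ReachableIn (E \ {v}) u w ∧ G.Adj w v := by
  induction h using Relation.ReflTransGen.head_induction_on with
  | refl => exact absurd rfl hu.2
  | @head a c hac _ ih =>
    by_cases hc : c = v
    · exact ⟨a, hu, .refl, hc ▸ hac.2.2⟩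
    · obtain ⟨w, hw, hcw, hwv⟩ := ih ⟨hac.2.1, hc⟩
      exact ⟨w, hw, .head ⟨hu, ⟨hac.2.1, hc⟩, hac.2.2⟩ hcw, hwv⟩

theorem P4FreeOn.mono (h : G.P4FreeOn E) (hFE : F ⊆ E) : G.P4FreeOn F :=
  fun w hw x hx y hy z hz => h w (hFE hw) x (hFE hx) y (hFE hy) z (hFE hz)

/-- The path on four vertices is self-complementary: an induced `w - x - y - z` in `Gᶜ`
is an induced `y - w - z - x` in `G`. -/
theorem P4FreeOn.compl (h : G.P4FreeOn E) : Gᶜ.P4FreeOn E := by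
  intro w hw x hx y hy z hz hwx hxy hyz
  simp only [compl_adj] at *
  by_contra! hc
  grind [h y hy w hw z hz x hx, adj_comm]

/-- If deleting `v` disconnected `E`, take a non-neighbour `u` of `v`, an edge `p - q` on a path
from `u` towards `v` with `q` adjacent and `p` not adjacent to `v`, and a neighbour `x` of `v` in
a component of `E \ {v}` avoiding `p`: then `p - q - v - x` is an induced path. -/
theorem P4FreeOn.preconnectedOn_sdiff_singleton (hP4 : G.P4FreeOn E)
    (hG : G.PreconnectedOn E) (hGc : Gᶜ.PreconnectedOn E) (hv : v ∈ E) :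
    G.PreconnectedOn (E \ {v}) := by
  intro a ha b hb
  by_contra hab
  obtain ⟨u, hu, -, huv⟩ := (hGc a ha.1 v hv).exists_adj_of_mem_sdiff ha
  obtain ⟨w, -, huw, hwv⟩ := (hG u hu.1 v hv).exists_adj_of_mem_sdiff hu
  obtain ⟨p, q, ⟨hp, hq, hpq⟩, hpv, hqv⟩ :=
    Relation.ReflTransGen.exists_boundary (P := (G.Adj · v)) huw ((compl_adj _ _ _).1 huv).2 hwv
  obtain ⟨c, hc, hpc⟩ : ∃ c ∈ E \ {v}, ¬ G.ReachableIn (E \ {v}) p c := by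
    by_cases hpa : G.ReachableIn (E \ {v}) p a
    · exact ⟨b, hb, fun hpb => hab (hpa.symm.trans hpb)⟩
    · exact ⟨a, ha, hpa⟩
  obtain ⟨x, hx, hcx, hxv⟩ := (hG c hc.1 v hv).exists_adj_of_mem_sdiff hc
  have hpx : ¬ G.ReachableIn (E \ {v}) p x := fun h => hpc (h.trans hcx.symm)
  rcases hP4 p hp.1 q hq.1 v hv x hx.1 hpq hqv hxv.symm with h | h | h
  · exact hpv h
  · exact hpx (.tail (.single ⟨hp, hq, hpq⟩) ⟨hq, hx, h⟩)
  · exact hpx (.single ⟨hp, hx, h⟩)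

/-- Seinsche's theorem. -/
theorem P4FreeOn.subsingleton_of_preconnectedOn (hfin : E.Finite) (hP4 : G.P4FreeOn E)
    (hG : G.PreconnectedOn E) (hGc : Gᶜ.PreconnectedOn E) : E.Subsingleton := by
  induction E, hfin using Set.Finite.induction_on with
  | empty => exact Set.subsingleton_empty
  | @insert v s hvs _ ih =>
    have hv : v ∈ insert v s := Set.mem_insert v s
    have hsd : insert v s \ {v} = s := Set.insert_sdiff_self_of_notMem hvs
    have hs := hP4.preconnectedOn_sdiff_singleton hG hGc hv
    have hsc := hP4.compl.preconnectedOn_sdiff_singleton hGc (by rwa [compl_compl]) hv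
    rw [hsd] at hs hsc
    have hsub := ih (hP4.mono (Set.subset_insert v s)) hs hsc
    rcases s.eq_empty_or_nonempty with rfl | ⟨u, hu⟩
    · simp
    -- the remaining vertex `u` of `s` would be both adjacent and non-adjacent to `v`
    exfalso
    have hu' : u ∈ insert v s \ {v} := by rwa [hsd]
    obtain ⟨w, hw, -, hwv⟩ := (hG u hu'.1 v hv).exists_adj_of_mem_sdiff hu'
    obtain ⟨w', hw', -, hw'v⟩ := (hGc u hu'.1 v hv).exists_adj_of_mem_sdiff hu'
    rw [hsd] at hw hw'
    exact ((compl_adj _ _ _).1 (hsub hw' hw ▸ hw'v)).2 hwv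

end SimpleGraph

section Decomposition

open SimpleGraph

variable {V : Type} {E X : Set V} {R : V → V → Prop}

/-- Orienting the edge `w - x` forces the orientation of the whole path, which is then one of
the N-configurations `(w, y, x, z)` or `(z, x, y, w)`. -/
theorem NFreeOrder.p4FreeOn_fromRel (hN : NFreeOrder R)
    (htrans : ∀ a b c, R a b → R b c → R a c) (E : Set V) : (fromRel R).P4FreeOn E := by
  rw [nFreeOrder_iff] at hN
  intro w _ x _ y _ z _ hwx hxy hyz
  have h₁ := hN w y x z
  have h₂ := hN z x y w
  simp only [IsInducedN, fromRel_adj] at *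
  grind

theorem IsSPOrder.of_parallel_split (hsupp : ∀ a b, R a b → a ∈ E ∧ b ∈ E)
    (hsub : ∀ X ⊂ E, X.Nonempty → IsSPOrder X (restrictRel R X))
    (hXE : X ⊆ E) (hX : X.Nonempty) (hY : (E \ X).Nonempty)
    (hcross : ∀ a ∈ X, ∀ b ∈ E \ X, ¬ R a b ∧ ¬ R b a) : IsSPOrder E R := by
  obtain ⟨a, ha⟩ := hX
  obtain ⟨b, hb⟩ := hY
  have h := (hsub X ((Set.ssubset_iff_of_subset hXE).2 ⟨b, hb⟩) ⟨a, ha⟩).par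
    (hsub (E \ X) ((Set.ssubset_iff_of_subset Set.sdiff_subset).2 ⟨a, hXE ha, fun h => h.2 ha⟩)
      ⟨b, hb⟩) Set.disjoint_sdiff_right
  rw [Set.union_sdiff_cancel hXE] at h
  convert h using 1
  ext a b
  have := hsupp a b
  have := hcross a
  have := hcross b
  grind [restrictRel]

theorem IsSPOrder.of_series_split (hirr : ∀ a, ¬ R a a)
    (htrans : ∀ a b c, R a b → R b c → R a c) (hsupp : ∀ a b, R a b → a ∈ E ∧ b ∈ E)
    (hsub : ∀ X ⊂ E, X.Nonempty → IsSPOrder X (restrictRel R X))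
    (hXE : X ⊆ E) (hX : X.Nonempty) (hY : (E \ X).Nonempty)
    (hcross : ∀ a ∈ X, ∀ b ∈ E \ X, R a b) : IsSPOrder E R := by
  obtain ⟨a, ha⟩ := hX
  obtain ⟨b, hb⟩ := hY
  have h := (hsub X ((Set.ssubset_iff_of_subset hXE).2 ⟨b, hb⟩) ⟨a, ha⟩).seq
    (hsub (E \ X) ((Set.ssubset_iff_of_subset Set.sdiff_subset).2 ⟨a, hXE ha, fun h => h.2 ha⟩)
      ⟨b, hb⟩) Set.disjoint_sdiff_right
  rw [Set.union_sdiff_cancel hXE] at h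
  convert h using 1
  ext a b
  have := hsupp a b
  have := hcross a
  have := hcross b
  have := htrans a b a
  grind [restrictRel]

theorem IsSPOrder.of_not_preconnectedOn (hsupp : ∀ a b, R a b → a ∈ E ∧ b ∈ E)
    (hsub : ∀ X ⊂ E, X.Nonempty → IsSPOrder X (restrictRel R X))
    (hG : ¬ (fromRel R).PreconnectedOn E) : IsSPOrder E R := by
  simp only [PreconnectedOn, not_forall] at hG
  obtain ⟨a, ha, b, hb, hab⟩ := hG
  refine .of_parallel_split (X := {x ∈ E | (fromRel R).ReachableIn E a x}) hsupp hsub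
    (Set.sep_subset _ _) ⟨a, ha, .refl⟩ ⟨b, hb, fun h => hab h.2⟩ ?_
  rintro x ⟨hx, hax⟩ y ⟨hy, hyX⟩
  have hxy : x ≠ y := fun h => hyX (h ▸ ⟨hx, hax⟩)
  constructor <;> intro h <;>
    exact hyX ⟨hy, hax.tail ⟨hx, hy, (fromRel_adj _ _ _).2 ⟨hxy, by tauto⟩⟩⟩

theorem IsSPOrder.of_not_preconnectedOn_compl (hfin : E.Finite) (hne : E.Nonempty)
    (hirr : ∀ a, ¬ R a a) (htrans : ∀ a b c, R a b → R b c → R a c)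
    (hsupp : ∀ a b, R a b → a ∈ E ∧ b ∈ E)
    (hsub : ∀ X ⊂ E, X.Nonempty → IsSPOrder X (restrictRel R X))
    (hGc : ¬ (fromRel R)ᶜ.PreconnectedOn E) : IsSPOrder E R := by
  simp only [PreconnectedOn, not_forall] at hGc
  obtain ⟨a, ha, b, hb, hab⟩ := hGc
  have : IsStrictOrder V R := { irrefl := hirr, trans := htrans }
  obtain ⟨m, hm, hmin⟩ := (Set.wellFoundedOn_iff.1 (hfin.wellFoundedOn (r := R))).has_min E hne
  set X := {x ∈ E | (fromRel R)ᶜ.ReachableIn E m x}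
  have hY : (E \ X).Nonempty := by
    by_contra! hEX
    have hEX : E ⊆ X := Set.sdiff_eq_empty.1 hEX
    exact hab ((hEX ha).2.symm.trans (hEX hb).2)
  refine .of_series_split hirr htrans hsupp hsub (Set.sep_subset _ _) ⟨m, hm, .refl⟩ hY ?_
  rintro x ⟨-, hmx⟩ y ⟨hy, hyX⟩
  -- otherwise `y` would lie in the co-component `X`
  have hcomp : ∀ z, (fromRel R)ᶜ.ReachableIn E m z → z ∈ E → R z y ∨ R y z := by
    intro z hmz hz
    by_contra! hzy
    have hne : z ≠ y := fun h => hyX ⟨hy, h ▸ hmz⟩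
    exact hyX ⟨hy, hmz.tail ⟨hz, hy, (compl_adj _ _ _).2
      ⟨hne, fun h => ((fromRel_adj _ _ _).1 h).2.elim hzy.1 hzy.2⟩⟩⟩
  induction hmx with
  | refl => exact (hcomp m .refl hm).resolve_right fun hym => hmin y hy ⟨hym, hy, hm⟩
  | @tail z z' hmz hzz' ih =>
    refine (hcomp z' (hmz.tail hzz') hzz'.2.1).resolve_right fun hyz' => ?_
    obtain ⟨hne, hnadj⟩ := (compl_adj _ _ _).1 hzz'.2.2
    exact hnadj ((fromRel_adj _ _ _).2 ⟨hne, Or.inl (htrans _ _ _ ih hyz')⟩)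

theorem isSPOrder_of_nFreeOrder (hfin : E.Finite) (hne : E.Nonempty) (hirr : ∀ a, ¬ R a a)
    (htrans : ∀ a b c, R a b → R b c → R a c) (hsupp : ∀ a b, R a b → a ∈ E ∧ b ∈ E)
    (hN : NFreeOrder R) : IsSPOrder E R := by
  induction hcard : E.ncard using Nat.strong_induction_on generalizing E R with
  | _ n ih =>
  have hsub : ∀ X ⊂ E, X.Nonempty → IsSPOrder X (restrictRel R X) := fun X hXE hX =>
    ih _ (hcard ▸ Set.ncard_lt_ncard hXE hfin) (hfin.subset hXE.subset) hX
      (fun a h => hirr a h.1) (fun a b c hab hbc => ⟨htrans a b c hab.1 hbc.1, hab.2.1, hbc.2.2⟩)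
      (fun _ _ h => h.2) (hN.restrictRel X) rfl
  by_cases hE : E.Subsingleton
  · obtain ⟨v, rfl⟩ := hE.eq_empty_or_singleton.resolve_left hne.ne_empty
    convert isSPOrder_singleton v using 1
    ext a b
    refine iff_false_intro fun h => ?_
    obtain ⟨rfl, rfl⟩ := hsupp a b h
    exact hirr _ h
  by_cases hG : (SimpleGraph.fromRel R).PreconnectedOn E
  · exact .of_not_preconnectedOn_compl hfin hne hirr htrans hsupp hsub fun hGc =>
      hE ((hN.p4FreeOn_fromRel htrans E).subsingleton_of_preconnectedOn hfin hG hGc)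
  · exact .of_not_preconnectedOn hsupp hsub hG

end Decomposition

/-- the finite series-parallel partial orders are exactly the finite
N-free partial orders. -/
theorem spOrder_iff_NFree {V : Type} (E : Set V) (R : V → V → Prop)
    (hfin : E.Finite) (hne : E.Nonempty)
    (hirr : ∀ a, ¬ R a a) (htrans : ∀ a b c, R a b → R b c → R a c)
    (hsupp : ∀ a b, R a b → a ∈ E ∧ b ∈ E) :
    IsSPOrder E R ↔ NFreeOrder R :=
  ⟨IsSPOrder.nFreeOrder, isSPOrder_of_nFreeOrder hfin hne hirr htrans hsupp⟩
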